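/- Let ⊙ be a non-degenerate pseudo-multiplication on [0,∞] and let τ be a σ-maxitive measure on a measurable space (E, 𝔅) having the Radon–Nikodym property with respect to the idempotent ⊙-integral. Then τ has no ⊙-spot: there is no measurable set B₀ such that τ(B₀) is not ⊙-finite and, for every measurable A ⊆ B₀, τ(A) is either 0 or not ⊙-finite. -/

import Mathlib

open scoped ENNReal
open Set

/-- A pseudo-multiplication on `[0,∞]`: associative, monotone in each argument,
continuous on `(0,∞) × [0,∞]`, with `s ↦ s ⊙ t` continuous on `(0,∞]`,
admitting a left identity, without zero divisors, and with `0` as annihilator. -/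
structure PseudoMul where
  op : ℝ≥0∞ → ℝ≥0∞ → ℝ≥0∞
  assoc : ∀ a b c, op (op a b) c = op a (op b c)
  mono_left : ∀ t, Monotone fun s => op s t
  mono_right : ∀ s, Monotone fun t => op s t
  continuousOn : ContinuousOn (fun p : ℝ≥0∞ × ℝ≥0∞ => op p.1 p.2) (Ioo 0 ⊤ ×ˢ univ)
  continuousOn_left : ∀ t, ContinuousOn (fun s => op s t) (Ioi 0)
  one : ℝ≥0∞
  one_op : ∀ t, op one t = t
  no_zero_divisors : ∀ s t, op s t = 0 → s = 0 ∨ t = 0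
  zero_op : ∀ t, op 0 t = 0
  op_zero : ∀ t, op t 0 = 0

/-- An element `t` is `⊙`-finite if `⨅_{s>0} s ⊙ t = 0`. -/
def PseudoMul.OFinite (P : PseudoMul) (t : ℝ≥0∞) : Prop :=
  ⨅ s ∈ Ioi (0 : ℝ≥0∞), P.op s t = 0

/-- `⊙` is non-degenerate if its left identity is `⊙`-finite. -/
def PseudoMul.Nondegenerate (P : PseudoMul) : Prop :=
  P.OFinite P.one

/-- A σ-maxitive measure: vanishes on `∅` and turns countable unions of
measurable sets into suprema. -/
def SigmaMaxitive {E : Type*} [MeasurableSpace E] (ν : Set E → ℝ≥0∞) : Prop :=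
  ν ∅ = 0 ∧ ∀ B : ℕ → Set E, (∀ n, MeasurableSet (B n)) →
    ν (⋃ n, B n) = ⨆ n, ν (B n)

/-- The idempotent `⊙`-integral `∫_B f ⊙ dν = ⨆_{t ∈ [0,∞)} t ⊙ ν(B ∩ {f > t})`. -/
noncomputable def idemInt {E : Type*} [MeasurableSpace E] (P : PseudoMul) (ν : Set E → ℝ≥0∞)
    (f : E → ℝ≥0∞) (B : Set E) : ℝ≥0∞ :=
  ⨆ t ∈ Iio (⊤ : ℝ≥0∞), P.op t (ν (B ∩ {x | t < f x}))

/-- `ν ≪⊙ τ`: `ν(B) ≤ ∞ ⊙ τ(B)` whenever `τ(B)` is `⊙`-finite. -/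
def OAbsCont {E : Type*} [MeasurableSpace E] (P : PseudoMul)
    (ν τ : Set E → ℝ≥0∞) : Prop :=
  ∀ B : Set E, MeasurableSet B → P.OFinite (τ B) → ν B ≤ P.op ⊤ (τ B)

/-- `τ` is σ-`⊙`-finite. -/
def SigmaOFinite {E : Type*} [MeasurableSpace E] (P : PseudoMul)
    (τ : Set E → ℝ≥0∞) : Prop :=
  ∃ B : ℕ → Set E, (∀ n, MeasurableSet (B n)) ∧ (⋃ n, B n) = univ ∧
    ∀ n, P.OFinite (τ (B n))

/-- A σ-ideal of the σ-algebra: a nonempty collection of measurable sets closed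
under countable unions and under measurable subsets. -/
def IsSigmaIdeal {E : Type*} [MeasurableSpace E] (I : Set (Set E)) : Prop :=
  I.Nonempty ∧ (∀ A ∈ I, MeasurableSet A) ∧
    (∀ B : ℕ → Set E, (∀ n, B n ∈ I) → (⋃ n, B n) ∈ I) ∧
    (∀ A B : Set E, B ∈ I → A ⊆ B → MeasurableSet A → A ∈ I)

/-- `τ` is σ-principal. -/
def SigmaPrincipal {E : Type*} [MeasurableSpace E] (τ : Set E → ℝ≥0∞) : Prop :=
  ∀ I : Set (Set E), IsSigmaIdeal I → ∃ L ∈ I, ∀ S ∈ I, τ (S \ L) = 0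

/-- `τ` has the Radon–Nikodym property w.r.t. the idempotent `⊙`-integral. -/
def HasRNP {E : Type*} [MeasurableSpace E] (P : PseudoMul)
    (τ : Set E → ℝ≥0∞) : Prop :=
  ∀ ν : Set E → ℝ≥0∞, SigmaMaxitive ν → OAbsCont P ν τ →
    ∃ c : E → ℝ≥0∞, Measurable c ∧
      ∀ B : Set E, MeasurableSet B → ν B = idemInt P τ c B

/-! Given a spot `B₀`, the two-valued measure `B ↦ 1⊙` if `τ(B ∩ B₀) ≠ 0` and `0` otherwise is
σ-maxitive and `≪⊙ τ`, since inside `B₀` a `⊙`-finite set is `τ`-null. Its density `c` would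
make the integral over `B₀` equal to `1⊙`, hence some term `t ⊙ τ(B₀ ∩ {c > t})` is nonzero and
at most `1⊙`, so `⊙`-finite. But `τ(B₀ ∩ {c > t})` is nonzero, hence not `⊙`-finite, and
left multiplication by `t ≠ 0` cannot make it `⊙`-finite. -/

namespace PseudoMul

variable {P : PseudoMul}

lemma OFinite.mono {a b : ℝ≥0∞} (hb : P.OFinite b) (hab : a ≤ b) : P.OFinite a :=
  le_antisymm ((iInf₂_mono fun s _ => P.mono_right s hab).trans_eq hb) zero_le

lemma oFinite_zero (P : PseudoMul) : P.OFinite 0 :=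
  le_antisymm ((iInf₂_le 1 zero_lt_one).trans_eq (P.op_zero 1)) zero_le

lemma one_ne_zero (P : PseudoMul) : P.one ≠ 0 := fun h =>
  ENNReal.top_ne_zero (by rw [← P.one_op ⊤, h, P.zero_op])

lemma op_pos {s t : ℝ≥0∞} (hs : s ≠ 0) (ht : t ≠ 0) : 0 < P.op s t :=
  pos_iff_ne_zero.2 fun h => (P.no_zero_divisors s t h).elim hs ht

/-- Because `r ⊙ (t ⊙ u) = (r ⊙ t) ⊙ u` with `r ⊙ t > 0`, the infimum defining `⊙`-finiteness
of `t ⊙ u` runs over a subfamily of the one for `u`. -/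
lemma OFinite.of_op {t u : ℝ≥0∞} (ht : t ≠ 0) (h : P.OFinite (P.op t u)) : P.OFinite u := by
  refine le_antisymm (le_trans ?_ h.le) zero_le
  refine le_iInf₂ fun r hr => ?_
  rw [← P.assoc]
  exact iInf₂_le _ (op_pos (mem_Ioi.1 hr).ne' ht)

end PseudoMul

section SigmaMaxitive

variable {E : Type*} [MeasurableSpace E] {τ : Set E → ℝ≥0∞}

lemma SigmaMaxitive.mono (hτ : SigmaMaxitive τ) {A B : Set E} (hA : MeasurableSet A)
    (hB : MeasurableSet B) (hAB : A ⊆ B) : τ A ≤ τ B := by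
  let C : ℕ → Set E := fun n => if n = 0 then A else B
  have hC : ⋃ n, C n = B :=
    subset_antisymm (iUnion_subset fun n => by dsimp only [C]; split_ifs <;> simp [hAB])
      (subset_iUnion C 1)
  calc τ A = τ (C 0) := rfl
    _ ≤ ⨆ n, τ (C n) := le_iSup (fun n => τ (C n)) 0
    _ = τ B := by rw [← hτ.2 C fun n => by dsimp only [C]; split_ifs <;> assumption, hC]

noncomputable def constOnNonnull (τ : Set E → ℝ≥0∞) (B₀ : Set E) (a : ℝ≥0∞) :
    Set E → ℝ≥0∞ :=
  fun B => if τ (B ∩ B₀) = 0 then 0 else a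

lemma SigmaMaxitive.constOnNonnull (hτ : SigmaMaxitive τ) {B₀ : Set E}
    (hB₀ : MeasurableSet B₀) (a : ℝ≥0∞) : SigmaMaxitive (constOnNonnull τ B₀ a) := by
  refine ⟨by simp [_root_.constOnNonnull, hτ.1], fun B hB => ?_⟩
  have hsup : τ ((⋃ n, B n) ∩ B₀) = ⨆ n, τ (B n ∩ B₀) := by
    rw [iUnion_inter]
    exact hτ.2 _ fun n => (hB n).inter hB₀
  by_cases hnull : ∀ n, τ (B n ∩ B₀) = 0
  · have hU : τ ((⋃ n, B n) ∩ B₀) = 0 := by simp [hsup, hnull]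
    simp [_root_.constOnNonnull, hU, hnull]
  · obtain ⟨n₀, hn₀⟩ := not_forall.1 hnull
    have hU : τ ((⋃ n, B n) ∩ B₀) ≠ 0 := by simpa [hsup] using hnull
    simp only [_root_.constOnNonnull, if_neg hU]
    exact le_antisymm (le_iSup_of_le n₀ (if_neg hn₀).ge)
      (iSup_le fun n => by split_ifs <;> simp)

end SigmaMaxitive

def IsOSpot {E : Type*} [MeasurableSpace E] (P : PseudoMul) (τ : Set E → ℝ≥0∞)
    (B₀ : Set E) : Prop :=
  MeasurableSet B₀ ∧ ¬ P.OFinite (τ B₀) ∧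
    ∀ A : Set E, MeasurableSet A → A ⊆ B₀ → τ A = 0 ∨ ¬ P.OFinite (τ A)

namespace IsOSpot

variable {E : Type*} [MeasurableSpace E] {P : PseudoMul} {τ : Set E → ℝ≥0∞} {B₀ : Set E}

lemma measure_ne_zero (h : IsOSpot P τ B₀) : τ B₀ ≠ 0 := fun h0 =>
  h.2.1 (h0 ▸ P.oFinite_zero)

lemma oAbsCont_constOnNonnull (h : IsOSpot P τ B₀) (hτ : SigmaMaxitive τ) (a : ℝ≥0∞) :
    OAbsCont P (constOnNonnull τ B₀ a) τ := by
  intro B hB hfin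
  have hBB₀ : MeasurableSet (B ∩ B₀) := hB.inter h.1
  have hnull : τ (B ∩ B₀) = 0 := (h.2.2 _ hBB₀ inter_subset_right).resolve_right
    fun hnf => hnf (hfin.mono (hτ.mono hBB₀ hB inter_subset_left))
  simp [constOnNonnull, hnull]

lemma not_oFinite_idemInt (h : IsOSpot P τ B₀) {c : E → ℝ≥0∞} (hc : Measurable c)
    (hne : idemInt P τ c B₀ ≠ 0) : ¬ P.OFinite (idemInt P τ c B₀) := by
  obtain ⟨t, ht, hterm⟩ : ∃ t ∈ Iio ⊤, P.op t (τ (B₀ ∩ {x | t < c x})) ≠ 0 := by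
    by_contra! hzero
    exact hne (le_antisymm (iSup₂_le fun t ht => (hzero t ht).le) zero_le)
  have ht0 : t ≠ 0 := fun h0 => hterm (by rw [h0, P.zero_op])
  have hu0 : τ (B₀ ∩ {x | t < c x}) ≠ 0 := fun h0 => hterm (by rw [h0, P.op_zero])
  have hunf : ¬ P.OFinite (τ (B₀ ∩ {x | t < c x})) :=
    (h.2.2 _ (h.1.inter (hc measurableSet_Ioi)) inter_subset_left).resolve_left hu0
  exact fun hfin => hunf ((hfin.mono (le_iSup₂_of_le t ht le_rfl)).of_op ht0)

end IsOSpot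

/-- A σ-maxitive measure with the Radon–Nikodym property has no `⊙`-spot. -/
theorem no_spot_of_rnp {E : Type*} [MeasurableSpace E]
    (P : PseudoMul) (hP : P.Nondegenerate)
    (τ : Set E → ℝ≥0∞) (hτ : SigmaMaxitive τ) (hRNP : HasRNP P τ) :
    ¬ ∃ B₀ : Set E, MeasurableSet B₀ ∧ ¬ P.OFinite (τ B₀) ∧
      ∀ A : Set E, MeasurableSet A → A ⊆ B₀ →
        τ A = 0 ∨ ¬ P.OFinite (τ A) := by
  rintro ⟨B₀, hspot⟩
  change IsOSpot P τ B₀ at hspot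
  obtain ⟨c, hc, hdensity⟩ := hRNP (constOnNonnull τ B₀ P.one)
    (hτ.constOnNonnull hspot.1 P.one) (hspot.oAbsCont_constOnNonnull hτ P.one)
  have hint : idemInt P τ c B₀ = P.one := by
    rw [← hdensity B₀ hspot.1, constOnNonnull, inter_self, if_neg hspot.measure_ne_zero]
  exact hspot.not_oFinite_idemInt hc (hint ▸ P.one_ne_zero) (hint ▸ hP)
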